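/- For every pair s = (s¹, s²) of vectors in ℂ⁴, the Dirac current contracts trivially with the 2-form bilinears: Σ_μ κ_s^μ ω^{AB}_{μν} = 0 for every ν ∈ Fin 5 and all A, B ∈ {1,2}. -/
import Mathlib


open Matrix

noncomputable section

/-- The mostly-minus Minkowski metric η = diag(1,−1,−1,−1,−1) (equal to its own inverse). -/
def eta (μ ν : Fin 5) : ℂ := if μ = ν then (if μ = 0 then 1 else -1) else 0

/-- Γ_{μν} := (1/2)(Γ_μ Γ_ν − Γ_ν Γ_μ). -/
def comm2 (Γ : Fin 5 → Matrix (Fin 4) (Fin 4) ℂ) (μ ν : Fin 5) : Matrix (Fin 4) (Fin 4) ℂ :=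
  (1/2 : ℂ) • (Γ μ * Γ ν - Γ ν * Γ μ)

/-- s̄₁ s₂ := s₁ᵀ C s₂. -/
def bil (Cm : Matrix (Fin 4) (Fin 4) ℂ) (s₁ s₂ : Fin 4 → ℂ) : ℂ := s₁ ⬝ᵥ Cm *ᵥ s₂

/-- s̄₁ M s₂ := s₁ᵀ C M s₂. -/
def bilM (Cm M : Matrix (Fin 4) (Fin 4) ℂ) (s₁ s₂ : Fin 4 → ℂ) : ℂ := s₁ ⬝ᵥ Cm *ᵥ M *ᵥ s₂

/-- The 2×2 symplectic form ε with ε_{12} = 1 (indices 0,1 standing for 1,2). -/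
def eps2 (A B : Fin 2) : ℂ := if A = 0 ∧ B = 1 then 1 else if A = 1 ∧ B = 0 then -1 else 0

/-- The scalar bilinear μ_s := ε_{AB} s̄ᴬ sᴮ. -/
def muS (Cm : Matrix (Fin 4) (Fin 4) ℂ) (s : Fin 2 → Fin 4 → ℂ) : ℂ :=
  ∑ A, ∑ B, eps2 A B * bil Cm (s A) (s B)

/-- The Dirac current with lowered index, κ_{s,μ} := ε_{AB} s̄ᴬ Γ_μ sᴮ. -/
def kappaLow (Γ : Fin 5 → Matrix (Fin 4) (Fin 4) ℂ) (Cm : Matrix (Fin 4) (Fin 4) ℂ)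
    (s : Fin 2 → Fin 4 → ℂ) (μ : Fin 5) : ℂ :=
  ∑ A, ∑ B, eps2 A B * bilM Cm (Γ μ) (s A) (s B)

/-- The Dirac current with raised index, κ_s^μ := η^{μμ} κ_{s,μ} = ε_{AB} s̄ᴬ Γ^μ sᴮ. -/
def kappaUp (Γ : Fin 5 → Matrix (Fin 4) (Fin 4) ℂ) (Cm : Matrix (Fin 4) (Fin 4) ℂ)
    (s : Fin 2 → Fin 4 → ℂ) (μ : Fin 5) : ℂ :=
  eta μ μ * kappaLow Γ Cm s μ

/-- The 2-form bilinears ω^{AB}_{μν} := s̄ᴬ Γ_{μν} sᴮ. -/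
def omegaS (Γ : Fin 5 → Matrix (Fin 4) (Fin 4) ℂ) (Cm : Matrix (Fin 4) (Fin 4) ℂ)
    (s : Fin 2 → Fin 4 → ℂ) (A B : Fin 2) (μ ν : Fin 5) : ℂ :=
  bilM Cm (comm2 Γ μ ν) (s A) (s B)

abbrev M4 := Matrix (Fin 4) (Fin 4) ℂ
lemma fv0 : ((0 : Fin 5) : ℕ) = 0 := rfl
lemma fv1 : ((1 : Fin 5) : ℕ) = 1 := rfl
lemma fv2 : ((2 : Fin 5) : ℕ) = 2 := rfl
lemma fv3 : ((3 : Fin 5) : ℕ) = 3 := rfl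
lemma fv4 : ((4 : Fin 5) : ℕ) = 4 := rfl

section Bilin

lemma skewBil {M : M4} (hM : Mᵀ = -M) (u v : Fin 4 → ℂ) :
    u ⬝ᵥ M *ᵥ v = -(v ⬝ᵥ M *ᵥ u) := by
  calc u ⬝ᵥ M *ᵥ v = (u ᵥ* M) ⬝ᵥ v := dotProduct_mulVec u M v
    _ = v ⬝ᵥ (u ᵥ* M) := dotProduct_comm _ _
    _ = v ⬝ᵥ (Mᵀ *ᵥ u) := by rw [mulVec_transpose]
    _ = -(v ⬝ᵥ M *ᵥ u) := by rw [hM, neg_mulVec, dotProduct_neg]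

lemma trace_vecMulVec' (x r : Fin 4 → ℂ) : trace (vecMulVec x r) = x ⬝ᵥ r := by
  simp [trace, Matrix.diag, vecMulVec_apply, dotProduct]

lemma trace_mul_vecMulVec (A : M4) (x r : Fin 4 → ℂ) :
    trace (A * vecMulVec x r) = r ⬝ᵥ (A *ᵥ x) := by
  simp only [trace, Matrix.diag, mul_apply, vecMulVec_apply, dotProduct, mulVec,
    Finset.mul_sum]
  apply Finset.sum_congr rfl
  intro i _
  apply Finset.sum_congr rfl
  intro j _
  ring

lemma vecMulVec_mulVec' (x r w : Fin 4 → ℂ) :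
    vecMulVec x r *ᵥ w = (r ⬝ᵥ w) • x := by
  funext i
  simp only [mulVec, vecMulVec_apply, dotProduct, Pi.smul_apply, smul_eq_mul,
    Finset.sum_mul]
  exact Finset.sum_congr rfl (fun j _ => by ring)

end Bilin

section GammaAlg
variable {Γ : Fin 5 → M4}
variable (hC : ∀ μ ν, Γ μ * Γ ν + Γ ν * Γ μ = (2 * eta μ ν) • (1 : M4))

lemma eta_diag_sq (μ : Fin 5) : eta μ μ * eta μ μ = 1 := by
  fin_cases μ <;> norm_num [eta, Fin.ext_iff]
lemma eta_diag_ne (μ : Fin 5) : eta μ μ ≠ 0 := by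
  fin_cases μ <;> norm_num [eta, Fin.ext_iff]
lemma eta_off {μ ν : Fin 5} (h : μ ≠ ν) : eta μ ν = 0 := by simp [eta, h]
lemma eta_symm (μ ν : Fin 5) : eta μ ν = eta ν μ := by
  rcases eq_or_ne μ ν with rfl | h
  · rfl
  · rw [eta_off h, eta_off (Ne.symm h)]
include hC
lemma gamma_sq (μ : Fin 5) : Γ μ * Γ μ = eta μ μ • 1 := by
  have h := hC μ μ
  have h2 : (2:ℂ) • (Γ μ * Γ μ) = (2:ℂ) • (eta μ μ • (1:M4)) := by
    rw [two_smul, h, smul_smul]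
  exact smul_right_injective M4 (by norm_num) h2
lemma anticom {μ ν : Fin 5} (h : μ ≠ ν) : Γ μ * Γ ν = -(Γ ν * Γ μ) := by
  have h2 := hC μ ν
  rw [eta_off h] at h2
  simp only [mul_zero, zero_smul] at h2
  exact eq_neg_of_add_eq_zero_left h2

lemma gamma_mul_eq (μ ν : Fin 5) : Γ μ * Γ ν = (2 * eta μ ν) • 1 - Γ ν * Γ μ :=
  eq_sub_of_add_eq (hC μ ν)

lemma trace2 (μ ν : Fin 5) : trace (Γ μ * Γ ν) = 4 * eta μ ν := by
  have h := congrArg trace (hC μ ν)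
  rw [trace_add, trace_smul, trace_one, trace_mul_comm (Γ ν) (Γ μ)] at h
  simp only [smul_eq_mul, Fintype.card_fin, Nat.cast_ofNat] at h
  linear_combination h / 2

lemma trace1 (μ : Fin 5) : trace (Γ μ) = 0 := by
  obtain ⟨ν, hne⟩ : ∃ ν, ν ≠ μ := by
    rcases eq_or_ne μ 0 with rfl | h
    · exact ⟨1, by decide⟩
    · exact ⟨0, Ne.symm h⟩
  have h1 : trace (Γ μ * Γ ν * Γ ν) = eta ν ν * trace (Γ μ) := by
    rw [mul_assoc, gamma_sq hC, mul_smul_comm, mul_one, trace_smul, smul_eq_mul]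
  have h2 : trace (Γ μ * Γ ν * Γ ν) = -(trace (Γ μ * Γ ν * Γ ν)) := by
    conv_lhs => rw [trace_mul_comm (Γ μ * Γ ν) (Γ ν), ← mul_assoc,
      anticom hC hne, neg_mul, mul_assoc]
    rw [trace_neg, ← mul_assoc]
  have h3 : trace (Γ μ * Γ ν * Γ ν) = 0 := by
    have := h2; linear_combination this / 2
  rw [h3] at h1
  exact (mul_eq_zero.mp h1.symm).resolve_left (eta_diag_ne ν)

lemma trace3 (μ ν ρ : Fin 5) : trace (Γ μ * (Γ ν * Γ ρ)) = 0 := by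
  obtain ⟨σ, h1, h2, h3⟩ : ∃ σ, σ ≠ μ ∧ σ ≠ ν ∧ σ ≠ ρ := by
    revert μ ν ρ; decide
  set X := Γ μ * (Γ ν * Γ ρ) with hX
  have hanti : Γ σ * X = -(X * Γ σ) := by
    rw [hX]
    rw [show Γ σ * (Γ μ * (Γ ν * Γ ρ)) = ((Γ σ * Γ μ) * Γ ν) * Γ ρ by
      simp only [mul_assoc]]
    rw [anticom hC h1]
    rw [show -(Γ μ * Γ σ) * Γ ν * Γ ρ = -(Γ μ * ((Γ σ * Γ ν) * Γ ρ)) by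
      simp only [neg_mul, mul_assoc]]
    rw [anticom hC h2]
    rw [show -(Γ μ * (-(Γ ν * Γ σ) * Γ ρ)) = Γ μ * (Γ ν * (Γ σ * Γ ρ)) by
      simp only [neg_mul, mul_neg, neg_neg, mul_assoc]]
    rw [anticom hC h3]
    simp only [mul_neg, neg_mul, neg_neg, mul_assoc]
  have e1 : trace (X * (Γ σ * Γ σ)) = eta σ σ * trace X := by
    rw [gamma_sq hC, mul_smul_comm, mul_one, trace_smul, smul_eq_mul]
  have e2 : trace (X * (Γ σ * Γ σ)) = -(trace (X * (Γ σ * Γ σ))) := by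
    conv_lhs => rw [← mul_assoc, trace_mul_comm (X * Γ σ) (Γ σ), ← mul_assoc,
      hanti, neg_mul, mul_assoc]
    rw [trace_neg]
  have e3 : trace (X * (Γ σ * Γ σ)) = 0 := by linear_combination e2 / 2
  rw [e3] at e1
  exact (mul_eq_zero.mp e1.symm).resolve_left (eta_diag_ne σ)

lemma trace4 (μ ν ρ τ : Fin 5) : trace (Γ μ * (Γ ν * (Γ ρ * Γ τ))) =
    4 * (eta μ ν * eta ρ τ - eta μ ρ * eta ν τ + eta μ τ * eta ν ρ) := by
  have e1 : trace (Γ μ * (Γ ν * (Γ ρ * Γ τ))) =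
      2 * eta μ ν * trace (Γ ρ * Γ τ) - trace (Γ ν * (Γ μ * (Γ ρ * Γ τ))) := by
    rw [← mul_assoc, gamma_mul_eq hC μ ν, sub_mul, smul_mul_assoc, one_mul,
      trace_sub, trace_smul, smul_eq_mul, mul_assoc]
    simp only [mul_assoc]
  have e2 : trace (Γ ν * (Γ μ * (Γ ρ * Γ τ))) =
      2 * eta μ ρ * trace (Γ ν * Γ τ) - trace (Γ ν * (Γ ρ * (Γ μ * Γ τ))) := by
    rw [show Γ μ * (Γ ρ * Γ τ) = ((2 * eta μ ρ) • 1 - Γ ρ * Γ μ) * Γ τ by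
      rw [← mul_assoc, gamma_mul_eq hC μ ρ]]
    rw [sub_mul, smul_mul_assoc, one_mul, mul_sub, trace_sub, mul_smul_comm,
      trace_smul, smul_eq_mul, mul_assoc, mul_assoc]
  have e3 : trace (Γ ν * (Γ ρ * (Γ μ * Γ τ))) =
      2 * eta μ τ * trace (Γ ν * Γ ρ) - trace (Γ ν * (Γ ρ * (Γ τ * Γ μ))) := by
    rw [gamma_mul_eq hC μ τ, mul_sub, mul_sub, mul_smul_comm, mul_smul_comm,
      mul_one, trace_sub, trace_smul, smul_eq_mul]
  have e4 : trace (Γ ν * (Γ ρ * (Γ τ * Γ μ))) = trace (Γ μ * (Γ ν * (Γ ρ * Γ τ))) := by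
    rw [show Γ ν * (Γ ρ * (Γ τ * Γ μ)) = (Γ ν * (Γ ρ * Γ τ)) * Γ μ by
      simp only [mul_assoc]]
    rw [trace_mul_comm]
  rw [e4] at e3
  rw [trace2 hC ρ τ] at e1
  rw [trace2 hC ν τ] at e2
  rw [trace2 hC ν ρ] at e3
  linear_combination (e1 - e2 + e3) / 2

omit hC in
lemma sum_eta_single {Mod : Type*} [AddCommGroup Mod] [Module ℂ Mod] (ρ : Fin 5)
    (f : Fin 5 → Mod) : ∑ τ, (eta τ τ * eta τ ρ) • f τ = f ρ := by
  rw [Finset.sum_eq_single ρ]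
  · rw [eta_diag_sq ρ, one_smul]
  · intro b _ hb
    rw [eta_off hb, mul_zero, zero_smul]
  · intro h; exact absurd (Finset.mem_univ ρ) h

lemma Phi_mul (M : M4) (ρ : Fin 5) :
    ∑ μ, eta μ μ • (Γ μ * ((M * Γ ρ) * Γ μ)) =
      (2:ℂ) • (Γ ρ * M) - (∑ μ, eta μ μ • (Γ μ * (M * Γ μ))) * Γ ρ := by
  have step : ∀ μ : Fin 5, eta μ μ • (Γ μ * ((M * Γ ρ) * Γ μ)) =
      (eta μ μ * eta μ ρ) • ((2:ℂ) • (Γ μ * M)) - eta μ μ • ((Γ μ * (M * Γ μ)) * Γ ρ) := by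
    intro μ
    rw [mul_assoc M, gamma_mul_eq hC ρ μ, mul_sub, mul_smul_comm, mul_one, mul_sub,
      mul_smul_comm, smul_sub, smul_smul]
    rw [show Γ μ * (M * (Γ μ * Γ ρ)) = Γ μ * (M * Γ μ) * Γ ρ by simp only [mul_assoc]]
    rw [smul_smul]
    congr 1
    rw [eta_symm ρ μ]; ring
  rw [Finset.sum_congr rfl (fun μ _ => step μ), Finset.sum_sub_distrib,
    sum_eta_single ρ (fun μ => (2:ℂ) • (Γ μ * M)), Finset.sum_mul]
  congr 1
  exact Finset.sum_congr rfl (fun μ _ => (smul_mul_assoc _ _ _).symm)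

lemma Phi_one' : ∑ μ, eta μ μ • (Γ μ * ((1:M4) * Γ μ)) = (5:ℂ) • (1:M4) := by
  have l : ∀ μ : Fin 5, eta μ μ • (Γ μ * ((1:M4) * Γ μ)) = (1:M4) := by
    intro μ; rw [one_mul, gamma_sq hC, smul_smul, eta_diag_sq, one_smul]
  rw [Finset.sum_congr rfl (fun μ _ => l μ), Finset.sum_const]
  simp only [Finset.card_univ, Fintype.card_fin]
  module

lemma Phi_gamma' (ρ : Fin 5) :
    ∑ μ, eta μ μ • (Γ μ * (Γ ρ * Γ μ)) = (-3:ℂ) • Γ ρ := by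
  have h1 := Phi_mul hC 1 ρ
  rw [Phi_one' hC] at h1
  simp only [one_mul, mul_one] at h1
  rw [h1, smul_mul_assoc, one_mul]
  module

lemma keyOne : ∑ μ, eta μ μ • (Γ μ * ((1:M4) * Γ μ)) =
    (1:M4) + trace (1:M4) • (1:M4) - ∑ τ, eta τ τ • (trace (Γ τ * (1:M4)) • Γ τ) := by
  rw [Phi_one' hC]
  simp only [mul_one, trace1 hC, zero_smul, smul_zero, Finset.sum_const, smul_zero]
  rw [trace_one]
  simp only [Fintype.card_fin, Nat.cast_ofNat]
  module

lemma keyGamma (ρ : Fin 5) : ∑ μ, eta μ μ • (Γ μ * (Γ ρ * Γ μ)) =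
    Γ ρ + trace (Γ ρ) • (1:M4) - ∑ τ, eta τ τ • (trace (Γ τ * Γ ρ) • Γ τ) := by
  rw [Phi_gamma' hC, trace1 hC, zero_smul]
  have : ∀ τ : Fin 5, eta τ τ • (trace (Γ τ * Γ ρ) • Γ τ) =
      (eta τ τ * eta τ ρ) • ((4:ℂ) • Γ τ) := by
    intro τ
    rw [trace2 hC, smul_smul, smul_smul]
    congr 1; ring
  rw [Finset.sum_congr rfl (fun τ _ => this τ), sum_eta_single ρ (fun τ => (4:ℂ) • Γ τ)]
  module

lemma keyTwo (ρ σ : Fin 5) : ∑ μ, eta μ μ • (Γ μ * ((Γ ρ * Γ σ) * Γ μ)) =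
    (Γ ρ * Γ σ) + trace (Γ ρ * Γ σ) • (1:M4) -
      ∑ τ, eta τ τ • (trace (Γ τ * (Γ ρ * Γ σ)) • Γ τ) := by
  have h1 := Phi_mul hC (Γ ρ) σ
  rw [Phi_gamma' hC] at h1
  rw [h1, trace2 hC]
  simp only [trace3 hC, zero_smul, smul_zero, Finset.sum_const, smul_zero]
  rw [smul_mul_assoc, gamma_mul_eq hC σ ρ, eta_symm σ ρ]
  module


def fam (Γ : Fin 5 → M4) : Fin 16 → M4 :=
  ![1, Γ 0, Γ 1, Γ 2, Γ 3, Γ 4, Γ 0 * Γ 1, Γ 0 * Γ 2, Γ 0 * Γ 3, Γ 0 * Γ 4,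
    Γ 1 * Γ 2, Γ 1 * Γ 3, Γ 1 * Γ 4, Γ 2 * Γ 3, Γ 2 * Γ 4, Γ 3 * Γ 4]

set_option maxHeartbeats 1000000 in
lemma gram_off : ∀ i j : Fin 16, i ≠ j → trace (fam Γ i * fam Γ j) = 0 := by
  intro i j hne
  fin_cases i <;> fin_cases j <;>
    first
      | exact absurd rfl hne
      | (simp only [fam, Matrix.cons_val_zero, Matrix.cons_val_one, Matrix.head_cons,
          Matrix.cons_val_succ', Fin.zero_eta, Fin.mk_zero, one_mul, mul_one, mul_assoc]
         norm_num [trace1 hC, trace2 hC, trace3 hC, trace4 hC, eta, Fin.ext_iff, fv0, fv1, fv2, fv3, fv4])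

set_option maxHeartbeats 1000000 in
lemma gram_diag : ∀ i : Fin 16, trace (fam Γ i * fam Γ i) ≠ 0 := by
  intro i
  fin_cases i <;>
    (simp only [fam, Matrix.cons_val_zero, Matrix.cons_val_one, Matrix.head_cons,
        Matrix.cons_val_succ', Fin.zero_eta, Fin.mk_zero, one_mul, mul_one, mul_assoc]
     norm_num [trace2 hC, trace4 hC, trace_one, eta, Fin.ext_iff, fv0, fv1, fv2, fv3, fv4])


lemma fam_indep : LinearIndependent ℂ (fam Γ) := by
  rw [Fintype.linearIndependent_iff]
  intro c hc i
  have H : ∑ k, c k * trace (fam Γ i * fam Γ k) = 0 := by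
    have h2 := congrArg (fun X => trace (fam Γ i * X)) hc
    simpa only [Finset.mul_sum, trace_sum, mul_smul_comm, trace_smul, smul_eq_mul,
      mul_zero, trace_zero] using h2
  rw [Finset.sum_eq_single i] at H
  · exact (mul_eq_zero.mp H).resolve_right (gram_diag hC i)
  · intro b _ hb
    rw [gram_off hC i b (Ne.symm hb), mul_zero]
  · intro h; exact absurd (Finset.mem_univ i) h

lemma fam_span : Submodule.span ℂ (Set.range (fam Γ)) = ⊤ := by
  apply (fam_indep hC).span_eq_top_of_card_eq_finrank
  simp [Module.finrank_matrix]

lemma keyFormula (M : M4) :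
    ∑ μ, eta μ μ • (Γ μ * (M * Γ μ)) =
      M + trace M • (1:M4) - ∑ τ, eta τ τ • (trace (Γ τ * M) • Γ τ) := by
  let f : M4 →ₗ[ℂ] M4 :=
    ∑ μ, eta μ μ • ((LinearMap.mulLeft ℂ (Γ μ)).comp (LinearMap.mulRight ℂ (Γ μ)))
  let g : M4 →ₗ[ℂ] M4 :=
    LinearMap.id + (Matrix.traceLinearMap (Fin 4) ℂ ℂ).smulRight (1:M4) -
      ∑ τ, eta τ τ •
        (((Matrix.traceLinearMap (Fin 4) ℂ ℂ).comp (LinearMap.mulLeft ℂ (Γ τ))).smulRight (Γ τ))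
  have hf : ∀ N, f N = ∑ μ, eta μ μ • (Γ μ * (N * Γ μ)) := by
    intro N
    simp [f, LinearMap.sum_apply, LinearMap.smul_apply, LinearMap.comp_apply,
      LinearMap.mulLeft_apply, LinearMap.mulRight_apply]
  have hg : ∀ N, g N = N + trace N • (1:M4) - ∑ τ, eta τ τ • (trace (Γ τ * N) • Γ τ) := by
    intro N
    simp [g, LinearMap.sum_apply, LinearMap.smul_apply, LinearMap.comp_apply,
      LinearMap.mulLeft_apply, LinearMap.smulRight_apply, Matrix.traceLinearMap]
  have hfg : f = g := by
    apply LinearMap.ext_on (fam_span hC)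
    rintro x ⟨i, rfl⟩
    rw [hf, hg]
    fin_cases i <;>
      simp only [fam, Matrix.cons_val_zero, Matrix.cons_val_one, Matrix.head_cons,
        Matrix.cons_val_succ', Fin.zero_eta, Fin.mk_zero]
    · exact keyOne hC
    · exact keyGamma hC 0
    · exact keyGamma hC 1
    · exact keyGamma hC 2
    · exact keyGamma hC 3
    · exact keyGamma hC 4
    · exact keyTwo hC 0 1
    · exact keyTwo hC 0 2
    · exact keyTwo hC 0 3
    · exact keyTwo hC 0 4
    · exact keyTwo hC 1 2
    · exact keyTwo hC 1 3
    · exact keyTwo hC 1 4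
    · exact keyTwo hC 2 3
    · exact keyTwo hC 2 4
    · exact keyTwo hC 3 4
  have := congrArg (fun (h : M4 →ₗ[ℂ] M4) => h M) hfg
  simpa only [hf, hg] using this

lemma fierz (Cm : M4) (a b x z : Fin 4 → ℂ) :
    ∑ μ, eta μ μ * ((a ⬝ᵥ Cm *ᵥ (Γ μ *ᵥ b)) * (x ⬝ᵥ Cm *ᵥ (Γ μ *ᵥ z))) =
      (x ⬝ᵥ Cm *ᵥ z) * (a ⬝ᵥ Cm *ᵥ b) + (x ⬝ᵥ Cm *ᵥ b) * (a ⬝ᵥ Cm *ᵥ z) -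
      ∑ τ, eta τ τ * ((x ⬝ᵥ Cm *ᵥ (Γ τ *ᵥ b)) * (a ⬝ᵥ Cm *ᵥ (Γ τ *ᵥ z))) := by
  have key := keyFormula hC (vecMulVec b (x ᵥ* Cm))
  have happ := congrArg (fun X => trace (X * vecMulVec z (a ᵥ* Cm))) key
  simp only [Finset.sum_mul, smul_mul_assoc, add_mul, sub_mul, one_mul,
    trace_sum, trace_smul, trace_add, trace_sub, smul_eq_mul] at happ
  have e1 : ∀ μ : Fin 5,
      trace (Γ μ * (vecMulVec b (x ᵥ* Cm) * Γ μ) * vecMulVec z (a ᵥ* Cm)) =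
        ((x ᵥ* Cm) ⬝ᵥ (Γ μ *ᵥ z)) * ((a ᵥ* Cm) ⬝ᵥ (Γ μ *ᵥ b)) := by
    intro μ
    rw [trace_mul_vecMulVec, ← mulVec_mulVec, ← mulVec_mulVec, vecMulVec_mulVec',
      mulVec_smul, dotProduct_smul, smul_eq_mul]
  have e2 : ∀ τ : Fin 5,
      trace (Γ τ * vecMulVec b (x ᵥ* Cm)) = (x ᵥ* Cm) ⬝ᵥ (Γ τ *ᵥ b) := by
    intro τ; rw [trace_mul_vecMulVec]
  have e2' : ∀ τ : Fin 5,
      trace (Γ τ * vecMulVec z (a ᵥ* Cm)) = (a ᵥ* Cm) ⬝ᵥ (Γ τ *ᵥ z) := by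
    intro τ; rw [trace_mul_vecMulVec]
  have e3 : trace (vecMulVec b (x ᵥ* Cm) * vecMulVec z (a ᵥ* Cm)) =
      ((x ᵥ* Cm) ⬝ᵥ z) * ((a ᵥ* Cm) ⬝ᵥ b) := by
    rw [trace_mul_vecMulVec, vecMulVec_mulVec', dotProduct_smul, smul_eq_mul]
  simp only [e1, e2, e2', e3, trace_vecMulVec'] at happ
  rw [dotProduct_comm b (x ᵥ* Cm), dotProduct_comm z (a ᵥ* Cm)] at happ
  simp only [← dotProduct_mulVec] at happ
  have flip : ∀ μ : Fin 5,
      eta μ μ * ((a ⬝ᵥ Cm *ᵥ (Γ μ *ᵥ b)) * (x ⬝ᵥ Cm *ᵥ (Γ μ *ᵥ z))) =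
        eta μ μ * ((x ⬝ᵥ Cm *ᵥ (Γ μ *ᵥ z)) * (a ⬝ᵥ Cm *ᵥ (Γ μ *ᵥ b))) := fun μ => by ring
  rw [Finset.sum_congr rfl (fun μ _ => flip μ)]
  linear_combination happ

end GammaAlg




/-- The Dirac current contracts trivially with the 2-form bilinears:
    Σ_μ κ_s^μ ω^{AB}_{μν} = 0. -/
theorem kappa_omega_contraction (Γ : Fin 5 → Matrix (Fin 4) (Fin 4) ℂ)
    (Cm : Matrix (Fin 4) (Fin 4) ℂ)
    (hC : ∀ μ ν, Γ μ * Γ ν + Γ ν * Γ μ = (2 * eta μ ν) • (1 : Matrix (Fin 4) (Fin 4) ℂ))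
    (hvol : Γ 0 * Γ 1 * Γ 2 * Γ 3 * Γ 4 = 1)
    (hCt : Cmᵀ = -Cm)
    (hCΓ : ∀ μ, Cm * Γ μ = (Γ μ)ᵀ * Cm)
    (s : Fin 2 → Fin 4 → ℂ) (ν : Fin 5) (A B : Fin 2) :
    ∑ μ, kappaUp Γ Cm s μ * omegaS Γ Cm s A B μ ν = 0 := by
  have hskew : ∀ u v : Fin 4 → ℂ, u ⬝ᵥ Cm *ᵥ v = -(v ⬝ᵥ Cm *ᵥ u) := fun u v =>
    skewBil hCt u v
  have hCG : ∀ μ, (Cm * Γ μ)ᵀ = -(Cm * Γ μ) := by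
    intro μ
    rw [transpose_mul, hCt, mul_neg, ← hCΓ μ]
  have hskewG : ∀ μ (u v : Fin 4 → ℂ),
      u ⬝ᵥ Cm *ᵥ (Γ μ *ᵥ v) = -(v ⬝ᵥ Cm *ᵥ (Γ μ *ᵥ u)) := by
    intro μ u v
    rw [mulVec_mulVec, mulVec_mulVec]
    exact skewBil (hCG μ) u v
  have hself : ∀ u : Fin 4 → ℂ, u ⬝ᵥ Cm *ᵥ u = 0 := fun u => by
    linear_combination (hskew u u) / 2
  have hselfG : ∀ μ (u : Fin 4 → ℂ), u ⬝ᵥ Cm *ᵥ (Γ μ *ᵥ u) = 0 := fun μ u => by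
    linear_combination (hskewG μ u u) / 2
  have hSF : ∀ (A : Fin 2) (z : Fin 4 → ℂ),
      ∑ μ, eta μ μ * ((s 0 ⬝ᵥ Cm *ᵥ (Γ μ *ᵥ s 1)) * (s A ⬝ᵥ Cm *ᵥ (Γ μ *ᵥ z))) =
        (s 0 ⬝ᵥ Cm *ᵥ s 1) * (s A ⬝ᵥ Cm *ᵥ z) := by
    intro A z
    fin_cases A
    · simp only [Fin.zero_eta]
      have h := fierz hC Cm (s 0) (s 1) (s 0) z
      linear_combination h / 2
    · simp only [Fin.mk_one]
      have h := fierz hC Cm (s 0) (s 1) (s 1) z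
      have hz : ∀ τ : Fin 5,
          eta τ τ * ((s 1 ⬝ᵥ Cm *ᵥ (Γ τ *ᵥ s 1)) * (s 0 ⬝ᵥ Cm *ᵥ (Γ τ *ᵥ z))) = 0 := by
        intro τ; rw [hselfG τ (s 1), zero_mul, mul_zero]
      rw [Finset.sum_congr rfl (fun τ _ => hz τ), Finset.sum_const, smul_zero,
        hself (s 1)] at h
      linear_combination h
  have hkap : ∀ μ, kappaLow Γ Cm s μ = 2 * (s 0 ⬝ᵥ Cm *ᵥ (Γ μ *ᵥ s 1)) := by
    intro μ
    rw [kappaLow, Fin.sum_univ_two, Fin.sum_univ_two, Fin.sum_univ_two]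
    norm_num [eps2, bilM]
    linear_combination - skewBil (hCG μ) (s 1) (s 0)
  have homega : ∀ μ, omegaS Γ Cm s A B μ ν =
      (s A ⬝ᵥ Cm *ᵥ (Γ μ *ᵥ (Γ ν *ᵥ s B))) - eta μ ν * (s A ⬝ᵥ Cm *ᵥ s B) := by
    intro μ
    have hc2 : comm2 Γ μ ν = Γ μ * Γ ν - eta μ ν • 1 := by
      rw [comm2, gamma_mul_eq hC ν μ, eta_symm ν μ]
      module
    rw [omegaS, bilM, hc2, sub_mulVec, smul_mulVec, one_mulVec, mulVec_sub,
      dotProduct_sub, mulVec_smul, dotProduct_smul, smul_eq_mul, ← mulVec_mulVec]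
  have expand : ∀ μ, kappaUp Γ Cm s μ * omegaS Γ Cm s A B μ ν =
      2 * (eta μ μ * ((s 0 ⬝ᵥ Cm *ᵥ (Γ μ *ᵥ s 1)) * (s A ⬝ᵥ Cm *ᵥ (Γ μ *ᵥ (Γ ν *ᵥ s B))))) -
      2 * ((eta μ μ * eta μ ν) • ((s 0 ⬝ᵥ Cm *ᵥ (Γ μ *ᵥ s 1)) * (s A ⬝ᵥ Cm *ᵥ s B))) := by
    intro μ
    rw [kappaUp, hkap μ, homega μ]
    simp only [smul_eq_mul]
    ring
  rw [Finset.sum_congr rfl (fun μ _ => expand μ), Finset.sum_sub_distrib,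
    ← Finset.mul_sum, ← Finset.mul_sum, hSF A (Γ ν *ᵥ s B),
    sum_eta_single ν (fun μ => (s 0 ⬝ᵥ Cm *ᵥ (Γ μ *ᵥ s 1)) * (s A ⬝ᵥ Cm *ᵥ s B))]
  fin_cases A <;> fin_cases B <;> simp only [Fin.zero_eta, Fin.mk_one]
  · rw [hself (s 0), hselfG ν (s 0)]; ring
  · ring
  · rw [hskew (s 1) (s 0), hskewG ν (s 1) (s 0)]; ring
  · rw [hself (s 1), hselfG ν (s 1)]; ring
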